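/- Let ρ be the probability measure on ℝⁿ with strictly positive density ρ(z) = exp(−H(z)) with respect to Lebesgue measure. Let Φ : ℝⁿ → ℝⁿ be a C¹ diffeomorphism with everywhere nonvanishing Jacobian determinant, let α₁,…,α_m : ℝⁿ → [0,1] be measurable with α := Πᵢ αᵢ, let 𝓑 = {0,1}^m \ {(0,…,0)}, let (Q_b)_{b∈𝓑} be Markov kernels on ℝⁿ, and define the event kernel Q(z,·) = Σ_{b∈𝓑} [ Πᵢ Ber(bᵢ; 1−αᵢ(z)) / (1 − α(z)) ] Q_b(z,·) wherever α(z) < 1, where Ber(b;p) = p if b = 1 and 1−p if b = 0. Let S : ℝⁿ → ℝⁿ be a measurable map whose pushforward of ρ equals ρ. Assume: (i) for all z, ρ(z) Πᵢ αᵢ(z) = ρ(Φ(z)) Πᵢ αᵢ(S(Φ(z))) |det DΦ(z)|; (ii) for every b ∈ 𝓑 and every bounded measurable f, ∫∫ f(z′) Πᵢ Ber(bᵢ; 1−αᵢ(z)) Q_b(z,dz′) ρ(dz) = ∫ f(z′) Πᵢ Ber(bᵢ; 1−αᵢ(S(z′))) ρ(dz′). Then the kernel K(z,·) = α(z) δ_{Φ(z)}(·)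 + (1 − α(z)) Q(z,·) admits ρ as invariant distribution: ∫ K(z,A) ρ(dz) = ρ(A) for every measurable A. -/

import Mathlib

/-!
The kernel moves deterministically to `Φ z` with probability `α z = Πᵢ αᵢ z`, and otherwise
triggers the event `b ≠ 0` with probability `Πᵢ Ber(bᵢ; 1 - αᵢ z)`. The change of variables
`z ↦ Φ z` turns condition (i) into: the `ρ`-mass that the deterministic move sends into `A` is
`∫_A α(S z) ρ(dz)`. Condition (ii) with `f = 1_A` says that the mass event `b` sends into `A` is
`∫_A Πᵢ Ber(bᵢ; 1 - αᵢ(S z)) ρ(dz)`. At every point these Bernoulli weights, together with the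
`b = 0` weight `α(S z)`, sum to one, so the total is `ρ A`.
-/

open MeasureTheory ProbabilityTheory Real

open scoped ENNReal

section BernoulliWeight

variable {ι : Type*} [Fintype ι]

/-- `bernoulliWeight p b = Πᵢ Ber(bᵢ; 1 - pᵢ)`: the probability that independent indicators
`Bᵢ ∼ Ber(1 - pᵢ)` take the values `b`. -/
def bernoulliWeight (p : ι → ℝ) (b : ι → Bool) : ℝ :=
  ∏ i, if b i then 1 - p i else p i

theorem bernoulliWeight_mem_Icc {p : ι → ℝ} (hp : ∀ i, p i ∈ Set.Icc (0 : ℝ) 1) (b : ι → Bool) :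
    bernoulliWeight p b ∈ Set.Icc (0 : ℝ) 1 := by
  have hfactor : ∀ i, (if b i then 1 - p i else p i) ∈ Set.Icc (0 : ℝ) 1 := fun i => by
    cases b i <;> simp [(hp i).1, (hp i).2]
  exact ⟨Finset.prod_nonneg fun i _ => (hfactor i).1,
    Finset.prod_le_one (fun i _ => (hfactor i).1) fun i _ => (hfactor i).2⟩

theorem bernoulliWeight_false (p : ι → ℝ) : bernoulliWeight p (fun _ => false) = ∏ i, p i := by
  simp [bernoulliWeight]

theorem sum_bernoulliWeight [DecidableEq ι] (p : ι → ℝ) : ∑ b, bernoulliWeight p b = 1 := by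
  simp [bernoulliWeight, ← Fintype.prod_sum (fun i (j : Bool) => if j then 1 - p i else p i)]

theorem sum_bernoulliWeight_ne_false [DecidableEq ι] (p : ι → ℝ) :
    ∑ b ∈ Finset.univ.filter (fun b : ι → Bool => b ≠ fun _ => false), bernoulliWeight p b
      = 1 - ∏ i, p i := by
  rw [Finset.filter_ne', eq_sub_iff_add_eq', ← bernoulliWeight_false,
    Finset.add_sum_erase _ _ (Finset.mem_univ _), sum_bernoulliWeight]

theorem ofReal_prod_add_sum_bernoulliWeight_ne_false [DecidableEq ι] {p : ι → ℝ}
    (hp : ∀ i, p i ∈ Set.Icc (0 : ℝ) 1) :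
    ENNReal.ofReal (∏ i, p i) + ∑ b ∈ Finset.univ.filter (fun b : ι → Bool => b ≠ fun _ => false),
      ENNReal.ofReal (bernoulliWeight p b) = 1 := by
  rw [← bernoulliWeight_false, Finset.filter_ne',
    Finset.add_sum_erase _ (fun b => ENNReal.ofReal (bernoulliWeight p b)) (Finset.mem_univ _),
    ← ENNReal.ofReal_sum_of_nonneg fun b _ => (bernoulliWeight_mem_Icc hp b).1,
    sum_bernoulliWeight, ENNReal.ofReal_one]

theorem measurable_bernoulliWeight {X : Type*} [MeasurableSpace X] {α : ι → X → ℝ}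
    (hα : ∀ i, Measurable (α i)) (b : ι → Bool) :
    Measurable fun z => bernoulliWeight (fun i => α i z) b :=
  Finset.measurable_prod _ fun i _ => by cases b i <;> simp [hα i, (hα i).const_sub]

end BernoulliWeight

theorem ofReal_smul_eq_sum_smul_of_eq_inv_smul {X ι : Type*} [MeasurableSpace X]
    {s : Finset ι} {w : ι → ℝ} (hw : ∀ i ∈ s, 0 ≤ w i) {c : ℝ} (hc : ∑ i ∈ s, w i = c)
    {μ : Measure X} {ν : ι → Measure X}
    (hμ : 0 < c → μ = (ENNReal.ofReal c)⁻¹ • ∑ i ∈ s, ENNReal.ofReal (w i) • ν i) :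
    ENNReal.ofReal c • μ = ∑ i ∈ s, ENNReal.ofReal (w i) • ν i := by
  subst hc
  rcases (Finset.sum_nonneg hw).lt_or_eq with hpos | hzero
  · rw [hμ hpos, smul_smul, ENNReal.mul_inv_cancel (by simpa using hpos) ENNReal.ofReal_ne_top,
      one_smul]
  · have hw0 := (Finset.sum_eq_zero_iff_of_nonneg hw).1 hzero.symm
    rw [← hzero, ENNReal.ofReal_zero, zero_smul]
    exact (Finset.sum_eq_zero fun i hi => by simp [hw0 i hi]).symm

theorem lintegral_withDensity_ofReal_mul_comp_eq_of_balance {E : Type*} [NormedAddCommGroup E]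
    [NormedSpace ℝ E] [FiniteDimensional ℝ E] [MeasurableSpace E] [BorelSpace E]
    (μ : Measure E) [μ.IsAddHaarMeasure] {ψ : E → ℝ} (hψ : Measurable ψ) (hψ0 : ∀ z, 0 ≤ ψ z)
    {Φ : E → E} (hΦ : Differentiable ℝ Φ) (hΦ_bij : Function.Bijective Φ) {a a' : E → ℝ}
    (hbal : ∀ z, ψ z * a z = ψ (Φ z) * a' (Φ z) * |(fderiv ℝ Φ z).det|) (g : E → ℝ≥0∞) :
    ∫⁻ z, ENNReal.ofReal (a z) * g (Φ z) ∂μ.withDensity (fun z => ENNReal.ofReal (ψ z))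
      = ∫⁻ z, ENNReal.ofReal (a' z) * g z ∂μ.withDensity (fun z => ENNReal.ofReal (ψ z)) := by
  have hψ_meas : Measurable fun z => ENNReal.ofReal (ψ z) := ENNReal.measurable_ofReal.comp hψ
  have hcov := lintegral_image_eq_lintegral_abs_det_fderiv_mul μ MeasurableSet.univ
    (fun z _ => (hΦ z).hasFDerivAt.hasFDerivWithinAt) hΦ_bij.injective.injOn
    fun z => ENNReal.ofReal (ψ z * a' z) * g z
  rw [Set.image_univ, hΦ_bij.surjective.range_eq, setLIntegral_univ, setLIntegral_univ] at hcov
  simp only [lintegral_withDensity_eq_lintegral_mul_non_measurable μ hψ_meas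
    (ae_of_all _ fun _ => ENNReal.ofReal_lt_top), Pi.mul_apply]
  calc ∫⁻ z, ENNReal.ofReal (ψ z) * (ENNReal.ofReal (a z) * g (Φ z)) ∂μ
      = ∫⁻ z, ENNReal.ofReal |(fderiv ℝ Φ z).det|
          * (ENNReal.ofReal (ψ (Φ z) * a' (Φ z)) * g (Φ z)) ∂μ := by
        refine lintegral_congr fun z => ?_
        rw [← mul_assoc, ← ENNReal.ofReal_mul (hψ0 z), hbal z, mul_comm _ |_|,
          ENNReal.ofReal_mul (abs_nonneg _), mul_assoc]
    _ = ∫⁻ z, ENNReal.ofReal (ψ z) * (ENNReal.ofReal (a' z) * g z) ∂μ := by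
        rw [← hcov]
        refine lintegral_congr fun z => ?_
        rw [ENNReal.ofReal_mul (hψ0 z), mul_assoc]

theorem ofReal_integral_eq_lintegral_ofReal_of_mem_Icc {X : Type*} [MeasurableSpace X]
    {ρ : Measure X} [IsFiniteMeasure ρ] {f : X → ℝ} (hf : Measurable f)
    (hf01 : ∀ z, f z ∈ Set.Icc (0 : ℝ) 1) :
    ENNReal.ofReal (∫ z, f z ∂ρ) = ∫⁻ z, ENNReal.ofReal (f z) ∂ρ :=
  ofReal_integral_eq_lintegral_ofReal
    (Integrable.of_bound hf.aestronglyMeasurable 1 <| ae_of_all _ fun z => by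
      rw [Real.norm_eq_abs, abs_of_nonneg (hf01 z).1]; exact (hf01 z).2)
    (ae_of_all _ fun z => (hf01 z).1)

theorem lintegral_ofReal_mul_kernel_apply_eq {X : Type*} [MeasurableSpace X] {ρ : Measure X}
    [IsFiniteMeasure ρ] {κ : Kernel X X} [IsMarkovKernel κ] {w v : X → ℝ} (hw : Measurable w)
    (hv : Measurable v) (hw01 : ∀ z, w z ∈ Set.Icc (0 : ℝ) 1)
    (hv01 : ∀ z, v z ∈ Set.Icc (0 : ℝ) 1) {A : Set X} (hA : MeasurableSet A)
    (h : ∫ z, w z * ∫ z', A.indicator 1 z' ∂κ z ∂ρ = ∫ z, v z * A.indicator 1 z ∂ρ) :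
    ∫⁻ z, ENNReal.ofReal (w z) * κ z A ∂ρ = ∫⁻ z, ENNReal.ofReal (v z) * A.indicator 1 z ∂ρ := by
  simp only [integral_indicator_one hA] at h
  have hindicator01 : ∀ z, A.indicator (1 : X → ℝ) z ∈ Set.Icc (0 : ℝ) 1 := fun z => by
    by_cases hz : z ∈ A <;> simp [hz]
  calc ∫⁻ z, ENNReal.ofReal (w z) * κ z A ∂ρ
      = ENNReal.ofReal (∫ z, w z * (κ z).real A ∂ρ) := by
        rw [ofReal_integral_eq_lintegral_ofReal_of_mem_Icc (f := fun z => w z * (κ z).real A)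
          (hw.mul (κ.measurable_coe hA).ennreal_toReal)
          fun z => unitInterval.mul_mem (hw01 z) ⟨measureReal_nonneg, measureReal_le_one⟩]
        refine lintegral_congr fun z => ?_
        rw [ENNReal.ofReal_mul (hw01 z).1, measureReal_def,
          ENNReal.ofReal_toReal (measure_ne_top _ _)]
    _ = ENNReal.ofReal (∫ z, v z * A.indicator 1 z ∂ρ) := by rw [h]
    _ = ∫⁻ z, ENNReal.ofReal (v z) * A.indicator 1 z ∂ρ := by
        rw [ofReal_integral_eq_lintegral_ofReal_of_mem_Icc (f := fun z => v z * A.indicator 1 z)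
          (hv.mul (measurable_one.indicator hA))
          fun z => unitInterval.mul_mem (hv01 z) (hindicator01 z)]
        refine lintegral_congr fun z => ?_
        by_cases hz : z ∈ A <;> simp [hz]

theorem lintegral_mul_indicator_add_sum_eq_of_add_sum_eq_one {X ι : Type*} [MeasurableSpace X]
    (ρ : Measure X) {A : Set X} (hA : MeasurableSet A) {s : Finset ι} {a : X → ℝ≥0∞}
    {v : ι → X → ℝ≥0∞} (ha : Measurable a) (hv : ∀ i ∈ s, Measurable (v i))
    (h1 : ∀ z, a z + ∑ i ∈ s, v i z = 1) :
    ∫⁻ z, a z * A.indicator 1 z ∂ρ + ∑ i ∈ s, ∫⁻ z, v i z * A.indicator 1 z ∂ρ = ρ A := by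
  have hA_meas : Measurable (A.indicator (1 : X → ℝ≥0∞)) := measurable_one.indicator hA
  rw [← lintegral_finsetSum (f := fun i z => v i z * A.indicator 1 z) _
      fun i hi => (hv i hi).mul hA_meas,
    ← lintegral_add_left (f := fun z => a z * A.indicator 1 z) (ha.mul hA_meas)]
  simp_rw [← Finset.sum_mul, ← add_mul, h1, one_mul]
  exact lintegral_indicator_one hA

theorem discrete_time_local_pdmp_invariance_general {n m : ℕ}
    (H : EuclideanSpace ℝ (Fin n) → ℝ) (hH_meas : Measurable H)
    (ρ : Measure (EuclideanSpace ℝ (Fin n)))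
    (hρ : ρ = volume.withDensity (fun z => ENNReal.ofReal (Real.exp (-H z))))
    (hprob : IsProbabilityMeasure ρ)
    (Φ : EuclideanSpace ℝ (Fin n) → EuclideanSpace ℝ (Fin n))
    (hΦ : ContDiff ℝ 1 Φ)
    (Φinv : EuclideanSpace ℝ (Fin n) → EuclideanSpace ℝ (Fin n))
    (hleft : Function.LeftInverse Φinv Φ) (hright : Function.RightInverse Φinv Φ)
    (α : Fin m → EuclideanSpace ℝ (Fin n) → ℝ) (hα_meas : ∀ i, Measurable (α i))
    (hα_range : ∀ i z, α i z ∈ Set.Icc (0 : ℝ) 1)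
    (Qb : (Fin m → Bool) → Kernel (EuclideanSpace ℝ (Fin n)) (EuclideanSpace ℝ (Fin n)))
    [∀ b, IsMarkovKernel (Qb b)]
    (Q : Kernel (EuclideanSpace ℝ (Fin n)) (EuclideanSpace ℝ (Fin n)))
    (hQmix : ∀ z, (∏ i, α i z) < 1 →
      (Q z : Measure (EuclideanSpace ℝ (Fin n)))
        = (ENNReal.ofReal (1 - ∏ i, α i z))⁻¹
          • ∑ b ∈ Finset.univ.filter (fun b : Fin m → Bool => b ≠ fun _ => false),
              ENNReal.ofReal (∏ i, if b i then 1 - α i z else α i z)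
                • (Qb b z : Measure (EuclideanSpace ℝ (Fin n))))
    (S : EuclideanSpace ℝ (Fin n) → EuclideanSpace ℝ (Fin n)) (hS_meas : Measurable S)
    (haccept : ∀ z, Real.exp (-H z) * ∏ i, α i z
      = Real.exp (-H (Φ z)) * (∏ i, α i (S (Φ z)))
        * |LinearMap.det ((fderiv ℝ Φ z).toLinearMap)|)
    (hQb : ∀ b : Fin m → Bool, b ≠ (fun _ => false) →
      ∀ f : EuclideanSpace ℝ (Fin n) → ℝ, Measurable f → (∃ C, ∀ z, |f z| ≤ C) →
      ∫ z, (∏ i, if b i then 1 - α i z else α i z) * ∫ z', f z' ∂(Qb b z) ∂ρ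
        = ∫ z', (∏ i, if b i then 1 - α i (S z') else α i (S z')) * f z' ∂ρ) :
    ∀ A : Set (EuclideanSpace ℝ (Fin n)), MeasurableSet A →
      ∫⁻ z, (ENNReal.ofReal (∏ i, α i z) * Measure.dirac (Φ z) A
        + ENNReal.ofReal (1 - ∏ i, α i z) * Q z A) ∂ρ = ρ A := by
  intro A hA
  have := hprob
  set B := Finset.univ.filter (fun b : Fin m → Bool => b ≠ fun _ => false)
  have hweight_meas := measurable_bernoulliWeight hα_meas
  have hacceptance : ∫⁻ z, ENNReal.ofReal (∏ i, α i z) * Measure.dirac (Φ z) A ∂ρ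
      = ∫⁻ z, ENNReal.ofReal (∏ i, α i (S z)) * A.indicator 1 z ∂ρ := by
    simp_rw [Measure.dirac_apply' _ hA, hρ]
    exact lintegral_withDensity_ofReal_mul_comp_eq_of_balance volume
      (measurable_exp.comp hH_meas.neg) (fun z => (exp_pos _).le)
      (hΦ.differentiable one_ne_zero) ⟨hleft.injective, hright.surjective⟩ haccept _
  have hevent : ∀ z, ENNReal.ofReal (1 - ∏ i, α i z) * Q z A
      = ∑ b ∈ B, ENNReal.ofReal (bernoulliWeight (fun i => α i z) b) * Qb b z A := fun z => by
    simpa using DFunLike.congr_fun (ofReal_smul_eq_sum_smul_of_eq_inv_smul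
      (fun b _ => (bernoulliWeight_mem_Icc (hα_range · z) b).1)
      (sum_bernoulliWeight_ne_false _) fun h => hQmix z (sub_pos.1 h)) A
  have hevent_integral : ∀ b ∈ B,
      ∫⁻ z, ENNReal.ofReal (bernoulliWeight (fun i => α i z) b) * Qb b z A ∂ρ
        = ∫⁻ z, ENNReal.ofReal (bernoulliWeight (fun i => α i (S z)) b) * A.indicator 1 z ∂ρ :=
    fun b hb => lintegral_ofReal_mul_kernel_apply_eq (hweight_meas b)
      ((hweight_meas b).comp hS_meas) (fun z => bernoulliWeight_mem_Icc (hα_range · z) b)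
      (fun z => bernoulliWeight_mem_Icc (hα_range · (S z)) b) hA
      (hQb b (Finset.mem_filter.1 hb).2 _ (measurable_one.indicator hA)
        ⟨1, fun z => by by_cases hz : z ∈ A <;> simp [hz]⟩)
  calc _ = ∫⁻ z, ENNReal.ofReal (∏ i, α i z) * Measure.dirac (Φ z) A ∂ρ
        + ∑ b ∈ B, ∫⁻ z, ENNReal.ofReal (bernoulliWeight (fun i => α i z) b) * Qb b z A ∂ρ := by
        have hterm_meas : ∀ b ∈ B, Measurable fun z =>
            ENNReal.ofReal (bernoulliWeight (fun i => α i z) b) * Qb b z A := fun b _ =>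
          (ENNReal.measurable_ofReal.comp (hweight_meas b)).mul ((Qb b).measurable_coe hA)
        simp_rw [hevent]
        rw [lintegral_add_right _ (Finset.measurable_sum _ hterm_meas),
          lintegral_finsetSum _ hterm_meas]
    _ = ρ A := by
        rw [hacceptance, Finset.sum_congr rfl hevent_integral]
        exact lintegral_mul_indicator_add_sum_eq_of_add_sum_eq_one ρ hA (by fun_prop)
          (fun b _ => ENNReal.measurable_ofReal.comp ((hweight_meas b).comp hS_meas))
          fun z => ofReal_prod_add_sum_bernoulliWeight_ne_false (hα_range · (S z))

/-- sufficient conditions for invariance of a discrete-time local PDMP, whose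
acceptance probability factorizes as `α(z) = Πᵢ αᵢ(z)` and whose event kernel is the mixture,
over nonzero Bernoulli indicator vectors `b`, of kernels `Q_b` weighted by the conditional
probabilities `Πᵢ Ber(bᵢ; 1−αᵢ(z)) / (1 − α(z))`. -/
theorem discrete_time_local_pdmp_invariance {n m : ℕ}
    (H : EuclideanSpace ℝ (Fin n) → ℝ) (hH_meas : Measurable H)
    (ρ : Measure (EuclideanSpace ℝ (Fin n)))
    (hρ : ρ = volume.withDensity (fun z => ENNReal.ofReal (Real.exp (-H z))))
    (hprob : IsProbabilityMeasure ρ)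
    (Φ : EuclideanSpace ℝ (Fin n) → EuclideanSpace ℝ (Fin n))
    (hΦ : ContDiff ℝ 1 Φ)
    (Φinv : EuclideanSpace ℝ (Fin n) → EuclideanSpace ℝ (Fin n))
    (hΦinv : ContDiff ℝ 1 Φinv)
    (hleft : Function.LeftInverse Φinv Φ) (hright : Function.RightInverse Φinv Φ)
    (hjac : ∀ z, LinearMap.det ((fderiv ℝ Φ z).toLinearMap) ≠ 0)
    (α : Fin m → EuclideanSpace ℝ (Fin n) → ℝ) (hα_meas : ∀ i, Measurable (α i))
    (hα_range : ∀ i z, α i z ∈ Set.Icc (0 : ℝ) 1)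
    (Qb : (Fin m → Bool) → Kernel (EuclideanSpace ℝ (Fin n)) (EuclideanSpace ℝ (Fin n)))
    [∀ b, IsMarkovKernel (Qb b)]
    (Q : Kernel (EuclideanSpace ℝ (Fin n)) (EuclideanSpace ℝ (Fin n))) [IsMarkovKernel Q]
    (hQmix : ∀ z, (∏ i, α i z) < 1 →
      (Q z : Measure (EuclideanSpace ℝ (Fin n)))
        = (ENNReal.ofReal (1 - ∏ i, α i z))⁻¹
          • ∑ b ∈ Finset.univ.filter (fun b : Fin m → Bool => b ≠ fun _ => false),
              ENNReal.ofReal (∏ i, if b i then 1 - α i z else α i z)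
                • (Qb b z : Measure (EuclideanSpace ℝ (Fin n))))
    (S : EuclideanSpace ℝ (Fin n) → EuclideanSpace ℝ (Fin n)) (hS_meas : Measurable S)
    (hS_pres : Measure.map S ρ = ρ)
    (haccept : ∀ z, Real.exp (-H z) * ∏ i, α i z
      = Real.exp (-H (Φ z)) * (∏ i, α i (S (Φ z)))
        * |LinearMap.det ((fderiv ℝ Φ z).toLinearMap)|)
    (hQb : ∀ b : Fin m → Bool, b ≠ (fun _ => false) →
      ∀ f : EuclideanSpace ℝ (Fin n) → ℝ, Measurable f → (∃ C, ∀ z, |f z| ≤ C) →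
      ∫ z, (∏ i, if b i then 1 - α i z else α i z) * ∫ z', f z' ∂(Qb b z) ∂ρ
        = ∫ z', (∏ i, if b i then 1 - α i (S z') else α i (S z')) * f z' ∂ρ) :
    ∀ A : Set (EuclideanSpace ℝ (Fin n)), MeasurableSet A →
      ∫⁻ z, (ENNReal.ofReal (∏ i, α i z) * Measure.dirac (Φ z) A
        + ENNReal.ofReal (1 - ∏ i, α i z) * Q z A) ∂ρ = ρ A :=
  discrete_time_local_pdmp_invariance_general H hH_meas ρ hρ hprob Φ hΦ Φinv hleft hright α hα_meas
    hα_range Qb Q hQmix S hS_meas haccept hQb
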